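/- arXiv:1505.01972 — 4 statements merged into one kernel-verified Lean document; each statement's English description precedes it below -/
import Mathlib

section
/- For a contraction T on a complex Hilbert space H and λ in the open unit disk, the Poisson kernel K(T,λ) = (I - conj(λ)T)⁻¹ + (I - λT*)⁻¹ - I satisfies K(T,λ) = (I - λT*)⁻¹(I - |λ|²T*T)(I - conj(λ)T)⁻¹, and consequently ⟨K(T,λ)h, h⟩ ≥ 0 for all h ∈ H. -/
open ContinuousLinearMap

local notation "⟪" x ", " y "⟫" => @inner ℂ _ _ x y

/-- The operator Poisson kernel `K(T,λ) = (I - conj(λ)T)⁻¹ + (I - λT*)⁻¹ - I`. -/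
noncomputable def poissonKernelOp {H : Type*} [NormedAddCommGroup H] [InnerProductSpace ℂ H]
    [CompleteSpace H] (T : H →L[ℂ] H) (lam : ℂ) : H →L[ℂ] H :=
  Ring.inverse (1 - (starRingEnd ℂ lam) • T) + Ring.inverse (1 - lam • adjoint T) - 1

/-!
Put `A = I - conj(λ) T`, so that `A* = I - λ T*`. For any two invertible elements,
`A⁻¹ + (A*)⁻¹ - I = (A*)⁻¹ (A + A* - A* A) A⁻¹`, and here `A + A* - A* A = I - |λ|² T* T`.
Since `‖T‖ ≤ 1` this middle factor is a positive operator, and the kernel is its congruence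
`(A⁻¹)* (I - |λ|² T* T) A⁻¹` by `A⁻¹`, hence positive as well.
-/

open scoped InnerProduct

theorem Ring.inverse_one_sub_add_inverse_one_sub_sub_one {R : Type*} [Ring R] {x y : R}
    (hx : IsUnit (1 - x)) (hy : IsUnit (1 - y)) :
    Ring.inverse (1 - y) + Ring.inverse (1 - x) - 1 =
      Ring.inverse (1 - x) * (1 - x * y) * Ring.inverse (1 - y) := by
  have hmid : 1 - x * y = (1 - y) + (1 - x) - (1 - x) * (1 - y) := by noncomm_ring
  obtain ⟨a, ha⟩ := hy
  obtain ⟨b, hb⟩ := hx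
  rw [hmid, ← ha, ← hb, Ring.inverse_unit, Ring.inverse_unit]
  simp only [mul_sub, mul_add, sub_mul, add_mul, Units.inv_mul, Units.inv_mul_cancel_left,
    one_mul, Units.mul_inv_cancel_right, Units.mul_inv]
  abel

namespace ContinuousLinearMap

variable {𝕜 E : Type*} [RCLike 𝕜] [NormedAddCommGroup E] [InnerProductSpace 𝕜 E]
  [CompleteSpace E]

theorem isPositive_one_sub_smul_adjoint_mul_self (T : E →L[𝕜] E) {r : ℝ}
    (hr : r * ‖T‖ ^ 2 ≤ 1) : (1 - (r : 𝕜) • (T† * T)).IsPositive := by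
  have hTT : IsSelfAdjoint (T† * T) := by
    simpa only [star_eq_adjoint] using IsSelfAdjoint.star_mul_self T
  refine isPositive_def'.mpr
    ⟨(IsSelfAdjoint.one _).sub (.smul (RCLike.conj_ofReal r) hTT), fun x => ?_⟩
  have hTx : ‖T x‖ ^ 2 ≤ ‖T‖ ^ 2 * ‖x‖ ^ 2 := by
    rw [← mul_pow]
    exact pow_le_pow_left₀ (norm_nonneg _) (T.le_opNorm x) 2
  have hre : (1 - (r : 𝕜) • (T† * T)).reApplyInnerSelf x = ‖x‖ ^ 2 - r * ‖T x‖ ^ 2 := by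
    simp [reApplyInnerSelf, inner_sub_left, inner_smul_left, adjoint_inner_left]
  rw [hre, sub_nonneg]
  rcases le_or_gt r 0 with hr0 | hr0
  · nlinarith [sq_nonneg ‖T x‖, sq_nonneg ‖x‖]
  · nlinarith [mul_le_mul_of_nonneg_left hTx hr0.le, sq_nonneg ‖x‖]

theorem star_one_sub_smul (c : 𝕜) (T : E →L[𝕜] E) :
    star (1 - c • T) = 1 - (starRingEnd 𝕜 c) • T† := by
  rw [star_sub, star_one, star_smul, star_eq_adjoint, RCLike.star_def]

end ContinuousLinearMap

/-- the factorization of the Poisson kernel and its positivity. -/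
theorem poissonKernel_factorization_and_pos {H : Type*} [NormedAddCommGroup H]
    [InnerProductSpace ℂ H] [CompleteSpace H] (T : H →L[ℂ] H) (hT : ‖T‖ ≤ 1)
    (lam : ℂ) (hlam : ‖lam‖ < 1) :
    poissonKernelOp T lam =
      Ring.inverse (1 - lam • adjoint T) *
        ((1 : H →L[ℂ] H) - ((‖lam‖ : ℂ) ^ 2) • (adjoint T * T)) *
        Ring.inverse (1 - (starRingEnd ℂ lam) • T) ∧
    ∀ h : H, 0 ≤ Complex.re ⟪poissonKernelOp T lam h, h⟫ := by
  set A := 1 - starRingEnd ℂ lam • T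
  have hA : IsUnit A := isUnit_one_sub_of_norm_lt_one <| calc
    ‖starRingEnd ℂ lam • T‖ = ‖lam‖ * ‖T‖ := by rw [norm_smul, Complex.norm_conj]
    _ ≤ ‖lam‖ * 1 := by gcongr
    _ < 1 := by rwa [mul_one]
  have hAstar : star A = 1 - lam • T† := by
    rw [star_one_sub_smul, Complex.conj_conj]
  have hprod : (lam • T†) * (starRingEnd ℂ lam • T) = ((‖lam‖ : ℂ) ^ 2) • (T† * T) := by
    rw [smul_mul_smul_comm, Complex.mul_conj']
  have hfact : poissonKernelOp T lam =
      Ring.inverse (1 - lam • T†) * (1 - ((‖lam‖ : ℂ) ^ 2) • (T† * T)) * Ring.inverse A := by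
    rw [poissonKernelOp, ← hprod]
    exact Ring.inverse_one_sub_add_inverse_one_sub_sub_one (hAstar ▸ hA.star) hA
  refine ⟨hfact, fun h => ?_⟩
  have hr : ‖lam‖ ^ 2 * ‖T‖ ^ 2 ≤ 1 := by
    rw [← mul_pow]
    exact pow_le_one₀ (by positivity) (mul_le_one₀ hlam.le (norm_nonneg T) hT)
  have hM := isPositive_one_sub_smul_adjoint_mul_self (𝕜 := ℂ) T hr
  rw [hfact, ← hAstar, Ring.inverse_star, star_eq_adjoint]
  push_cast at hM
  exact (hM.adjoint_conj (Ring.inverse A)).re_inner_nonneg_left h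
end

section
/- Let ν be a finite positive Borel measure on [0,2π] that is singular with respect to Lebesgue measure and ν ≠ 0. Then there is no constant C such that ν([t-ε, t+ε]) ≤ Cε for all t ∈ [0,2π] and all ε > 0 with t in the support of ν. Consequently, a singular unitary operator U (unitary whose spectral measure is singular with respect to Lebesgue measure) satisfies: if T is a contraction with ‖(I-λU)⁻¹(U-T)h‖² ≤ c/(1-|λ|²)·(‖h‖² - ‖Th‖²) for all λ ∈ 𝔻, h ∈ H, then T = U. -/
/-!
A measure singular to Lebesgue measure has infinite symmetric density at almost every point:
by Besicovitch differentiation, `ν([t-ε, t+ε]) / (2ε) → ∞` as `ε → 0⁺` for `ν`-a.e. `t`,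
which already rules out a linear bound `ν([t-ε, t+ε]) ≤ Cε`.

For the operator statement, suppose `y = (U - T) h ≠ 0`. With `λ = (1-ε)e^{-it}` the kernel
`|1 - λe^{is}|⁻²` of `‖(I - λU)⁻¹ y‖²` is at least `(2ε)⁻²` on `[t-ε, t+ε]`, while the resolvent
estimate bounds `‖(I - λU)⁻¹ y‖²` by a multiple of `1/ε`. Hence `μ_y([t-ε, t+ε]) = O(ε)` at every
`t`, contradicting the first part for the nonzero singular measure `μ_y`.
-/

open ContinuousLinearMap MeasureTheory Metric Filter Set Topology
open scoped ENNReal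

namespace MeasureTheory.Measure.MutuallySingular

variable {α : Type*} [MetricSpace α] [MeasurableSpace α] [BorelSpace α]
  [SecondCountableTopology α] [HasBesicovitchCovering α]

theorem ae_tendsto_measure_closedBall_div_zero {μ ν : Measure α} [IsLocallyFiniteMeasure μ]
    [IsLocallyFiniteMeasure ν] (h : μ ⟂ₘ ν) :
    ∀ᵐ x ∂ν, Tendsto (fun r => μ (closedBall x r) / ν (closedBall x r)) (𝓝[>] 0) (𝓝 0) := by
  filter_upwards [(Besicovitch.vitaliFamily ν).ae_eventually_measure_zero_of_singular h]
    with x hx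
  exact hx.comp (Besicovitch.tendsto_filterAt ν x)

theorem ae_tendsto_measure_Icc_div_atTop {ν : Measure ℝ} [IsLocallyFiniteMeasure ν]
    (h : ν ⟂ₘ volume) :
    ∀ᵐ x ∂ν, Tendsto (fun ε => (ν (Icc (x - ε) (x + ε))).toReal / (2 * ε)) (𝓝[>] 0) atTop := by
  filter_upwards [ae_tendsto_measure_closedBall_div_zero h.symm] with x hx
  rw [← ENNReal.tendsto_ofReal_nhds_top, ← ENNReal.inv_zero]
  refine (tendsto_inv_iff.2 hx).congr' ?_
  filter_upwards [self_mem_nhdsWithin] with ε (hε : 0 < ε)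
  have hfin : ν (closedBall x ε) ≠ ∞ := measure_closedBall_lt_top.ne
  rw [Real.volume_closedBall, ENNReal.inv_div (Or.inl hfin) (Or.inr (by simpa using hε)),
    ENNReal.ofReal_div_of_pos (by positivity), ENNReal.ofReal_toReal, Real.closedBall_eq_Icc]
  simpa [Real.closedBall_eq_Icc] using hfin

end MeasureTheory.Measure.MutuallySingular

section SymmetricDensity

variable {ν : Measure ℝ} {x : ℝ}

theorem eventually_mul_lt_measure_Icc
    (h : Tendsto (fun ε => (ν (Icc (x - ε) (x + ε))).toReal / (2 * ε)) (𝓝[>] 0) atTop)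
    (C : ℝ) : ∀ᶠ ε in 𝓝[>] 0, C * ε < (ν (Icc (x - ε) (x + ε))).toReal := by
  filter_upwards [h.eventually_gt_atTop (C / 2), self_mem_nhdsWithin] with ε hC (hε : 0 < ε)
  rw [lt_div_iff₀ (by positivity)] at hC
  linarith

theorem measure_Ioo_ne_zero_of_tendsto
    (h : Tendsto (fun ε => (ν (Icc (x - ε) (x + ε))).toReal / (2 * ε)) (𝓝[>] 0) atTop)
    {ε : ℝ} (hε : 0 < ε) : ν (Ioo (x - ε) (x + ε)) ≠ 0 := by
  obtain ⟨δ, hδpos, hδ⟩ := ((eventually_mul_lt_measure_Icc h 0).and (Ioo_mem_nhdsGT hε)).exists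
  intro h0
  have hδ0 : ν (Icc (x - δ) (x + δ)) = 0 :=
    measure_mono_null (Icc_subset_Ioo (by linarith [hδ.2]) (by linarith [hδ.2])) h0
  simp [hδ0] at hδpos

end SymmetricDensity

section CauchyKernel

open Complex

theorem one_sub_norm_le_norm_one_sub_mul_exp (lam : ℂ) (s : ℝ) :
    1 - ‖lam‖ ≤ ‖1 - lam * exp (I * s)‖ := by
  simpa [norm_exp_I_mul_ofReal] using norm_sub_norm_le (1 : ℂ) (lam * exp (I * s))

theorem norm_one_sub_mul_exp_le {ε t s : ℝ} (hε : 0 ≤ ε) (hs : |s - t| ≤ ε) :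
    ‖1 - ((1 - ε : ℝ) : ℂ) * exp (-I * t) * exp (I * s)‖ ≤ 2 * ε := by
  have hrot : exp (-I * t) * exp (I * s) = exp (I * (s - t : ℝ)) := by
    rw [← exp_add]; push_cast; ring_nf
  calc ‖1 - ((1 - ε : ℝ) : ℂ) * exp (-I * t) * exp (I * s)‖
      = ‖-(exp (I * (s - t : ℝ)) - 1) + ε * exp (I * (s - t : ℝ))‖ := by
        rw [mul_assoc, hrot]; push_cast; ring_nf
    _ ≤ ‖exp (I * (s - t : ℝ)) - 1‖ + ε := by
        refine (norm_add_le _ _).trans_eq ?_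
        rw [norm_neg, norm_mul, norm_exp_I_mul_ofReal, mul_one, norm_real, Real.norm_of_nonneg hε]
    _ ≤ 2 * ε := by
        linarith [Real.norm_exp_I_mul_ofReal_sub_one_le (x := s - t), Real.norm_eq_abs (s - t)]

theorem integrable_one_div_normSq_one_sub_mul_exp (m : Measure ℝ) [IsFiniteMeasure m] {lam : ℂ}
    (hlam : ‖lam‖ < 1) : Integrable (fun s : ℝ => 1 / normSq (1 - lam * exp (I * s))) m := by
  have hlow (s : ℝ) : (1 - ‖lam‖) ^ 2 ≤ normSq (1 - lam * exp (I * s)) := by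
    rw [normSq_eq_norm_sq]
    exact pow_le_pow_left₀ (by linarith) (one_sub_norm_le_norm_one_sub_mul_exp lam s) 2
  have hmeas : Measurable fun s : ℝ => 1 / normSq (1 - lam * exp (I * s)) := by fun_prop
  refine Integrable.mono' (integrable_const (1 / (1 - ‖lam‖) ^ 2)) hmeas.aestronglyMeasurable
    (ae_of_all _ fun s => ?_)
  rw [Real.norm_of_nonneg (one_div_nonneg.2 (normSq_nonneg _))]
  exact one_div_le_one_div_of_le (pow_pos (by linarith) 2) (hlow s)

theorem measure_Icc_le_of_integral_le (m : Measure ℝ) [IsFiniteMeasure m] {A : ℝ} (hA : 0 ≤ A)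
    (hm : ∀ lam : ℂ, ‖lam‖ < 1 →
      ∫ s, 1 / normSq (1 - lam * exp (I * s)) ∂m ≤ A / (1 - ‖lam‖ ^ 2))
    (t : ℝ) {ε : ℝ} (hε0 : 0 < ε) (hε1 : ε ≤ 1) :
    (m (Icc (t - ε) (t + ε))).toReal ≤ 4 * A * ε := by
  set lam : ℂ := ((1 - ε : ℝ) : ℂ) * exp (-I * t)
  have hlam : ‖lam‖ = 1 - ε := by
    rw [norm_mul, norm_real, Real.norm_of_nonneg (by linarith), norm_exp]
    simp
  have hlam1 : ‖lam‖ < 1 := by linarith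
  set f : ℝ → ℝ := fun s => 1 / normSq (1 - lam * exp (I * s))
  have hf : Integrable f m := integrable_one_div_normSq_one_sub_mul_exp m hlam1
  have hkernel : ∀ s ∈ Icc (t - ε) (t + ε), 1 / (4 * ε ^ 2) ≤ f s := by
    intro s hs
    have hlow := one_sub_norm_le_norm_one_sub_mul_exp lam s
    have hup := norm_one_sub_mul_exp_le (t := t) (s := s) hε0.le
      (abs_sub_le_iff.2 ⟨by linarith [hs.2], by linarith [hs.1]⟩)
    rw [hlam] at hlow
    refine one_div_le_one_div_of_le ?_ ?_ <;> rw [normSq_eq_norm_sq]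
    · nlinarith
    · nlinarith
  calc (m (Icc (t - ε) (t + ε))).toReal
      = 4 * ε ^ 2 * (1 / (4 * ε ^ 2) * m.real (Icc (t - ε) (t + ε))) := by
        rw [measureReal_def]; field_simp
    _ ≤ 4 * ε ^ 2 * ∫ s in Icc (t - ε) (t + ε), f s ∂m := by
        gcongr
        exact setIntegral_ge_of_const_le_real measurableSet_Icc (measure_ne_top _ _) hkernel
          hf.integrableOn
    _ ≤ 4 * ε ^ 2 * ∫ s, f s ∂m := by
        have hf0 : 0 ≤ᵐ[m] f := ae_of_all _ fun s => one_div_nonneg.2 (normSq_nonneg _)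
        exact mul_le_mul_of_nonneg_left (setIntegral_le_integral hf hf0) (by positivity)
    _ ≤ 4 * ε ^ 2 * (A / ε) := by
        gcongr
        refine (hm lam hlam1).trans ?_
        rw [hlam]
        gcongr
        nlinarith
    _ = 4 * A * ε := by field_simp

end CauchyKernel

theorem singular_unitary_maximal_general {H : Type*} [NormedAddCommGroup H]
    [InnerProductSpace ℂ H]
    (ν : Measure ℝ) [IsFiniteMeasure ν] (hν0 : ν ≠ 0)
    (hνsing : ν.MutuallySingular volume)
    (hνsupp : ν (Set.Icc (0 : ℝ) (2 * Real.pi))ᶜ = 0)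
    (U T : H →L[ℂ] H) (hT : ‖T‖ ≤ 1)
    (μ : H → Measure ℝ) [∀ y, IsFiniteMeasure (μ y)]
    (hspec : ∀ y : H, ∀ lam : ℂ, ‖lam‖ < 1 →
      ∫ t, (1 / Complex.normSq (1 - lam * Complex.exp (Complex.I * t))) ∂(μ y) =
        ‖Ring.inverse (1 - lam • U) y‖ ^ 2)
    (hμsing : ∀ y : H, (μ y).MutuallySingular volume)
    (c : ℝ) (hc : 0 < c)
    (hres : ∀ (lam : ℂ), ‖lam‖ < 1 → ∀ h : H,
      ‖Ring.inverse (1 - lam • U) ((U - T) h)‖ ^ 2 ≤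
        c / (1 - ‖lam‖ ^ 2) * (‖h‖ ^ 2 - ‖T h‖ ^ 2)) :
    (¬ ∃ C : ℝ, ∀ t ∈ Set.Icc (0 : ℝ) (2 * Real.pi),
        (∀ ε > (0 : ℝ), ν (Set.Ioo (t - ε) (t + ε)) ≠ 0) →
        ∀ ε > (0 : ℝ), (ν (Set.Icc (t - ε) (t + ε))).toReal ≤ C * ε) ∧
    T = U := by
  refine ⟨fun ⟨C, hC⟩ => ?_, ?_⟩
  · have := ae_neBot.2 hν0
    obtain ⟨t, htend, ht⟩ :=
      (hνsing.ae_tendsto_measure_Icc_div_atTop.and (mem_ae_iff.2 hνsupp)).exists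
    obtain ⟨ε, hlt, hε⟩ := ((eventually_mul_lt_measure_Icc htend C).and self_mem_nhdsWithin).exists
    exact (hC t ht (fun _ => measure_Ioo_ne_zero_of_tendsto htend) ε hε).not_gt hlt
  · ext h
    by_contra hne
    set y := (U - T) h
    have hy : y ≠ 0 := sub_ne_zero.2 (Ne.symm hne)
    have hμy : μ y ≠ 0 := by
      intro h0
      have hy0 : 0 = ‖y‖ ^ 2 := by simpa [h0] using hspec y 0 (by simp)
      exact hy (by simpa using hy0.symm)
    have := ae_neBot.2 hμy
    obtain ⟨t, htend⟩ := (hμsing y).ae_tendsto_measure_Icc_div_atTop.exists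
    set A := c * (‖h‖ ^ 2 - ‖T h‖ ^ 2)
    have hA : 0 ≤ A := mul_nonneg hc.le <| sub_nonneg.2 <|
      pow_le_pow_left₀ (norm_nonneg _) ((T.le_of_opNorm_le hT h).trans_eq (one_mul _)) 2
    have hintegral : ∀ lam : ℂ, ‖lam‖ < 1 →
        ∫ s, 1 / Complex.normSq (1 - lam * Complex.exp (Complex.I * s)) ∂(μ y) ≤
          A / (1 - ‖lam‖ ^ 2) := fun lam hlam =>
      (hspec y lam hlam).trans_le ((hres lam hlam h).trans_eq (div_mul_eq_mul_div ..))
    obtain ⟨ε, hlt, hε⟩ :=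
      ((eventually_mul_lt_measure_Icc htend (4 * A)).and (Ioc_mem_nhdsGT one_pos)).exists
    exact (measure_Icc_le_of_integral_le (μ y) hA hintegral t hε.1 hε.2).not_gt hlt

/-- (a) a nonzero finite singular measure on `[0,2π]` admits no linear bound
`ν([t-ε,t+ε]) ≤ Cε` at points of its support; (b) consequently, if `U` is a singular
unitary (all its localized spectral measures `μ y` are singular w.r.t. Lebesgue measure)
and a contraction `T` satisfies the resolvent estimate
`‖(I-λU)⁻¹(U-T)h‖² ≤ c/(1-|λ|²)·(‖h‖²-‖Th‖²)`, then `T = U`. -/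
theorem singular_unitary_maximal {H : Type*} [NormedAddCommGroup H]
    [InnerProductSpace ℂ H] [CompleteSpace H]
    (ν : Measure ℝ) [IsFiniteMeasure ν] (hν0 : ν ≠ 0)
    (hνsing : ν.MutuallySingular volume)
    (hνsupp : ν (Set.Icc (0 : ℝ) (2 * Real.pi))ᶜ = 0)
    (U T : H →L[ℂ] H) (hUl : adjoint U * U = 1) (hUr : U * adjoint U = 1) (hT : ‖T‖ ≤ 1)
    (μ : H → Measure ℝ) [∀ y, IsFiniteMeasure (μ y)]
    (hspec : ∀ y : H, ∀ lam : ℂ, ‖lam‖ < 1 →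
      ∫ t, (1 / Complex.normSq (1 - lam * Complex.exp (Complex.I * t))) ∂(μ y) =
        ‖Ring.inverse (1 - lam • U) y‖ ^ 2)
    (hμsupp : ∀ y : H, μ y (Set.Icc (0 : ℝ) (2 * Real.pi))ᶜ = 0)
    (hμsing : ∀ y : H, (μ y).MutuallySingular volume)
    (c : ℝ) (hc : 0 < c)
    (hres : ∀ (lam : ℂ), ‖lam‖ < 1 → ∀ h : H,
      ‖Ring.inverse (1 - lam • U) ((U - T) h)‖ ^ 2 ≤
        c / (1 - ‖lam‖ ^ 2) * (‖h‖ ^ 2 - ‖T h‖ ^ 2)) :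
    (¬ ∃ C : ℝ, ∀ t ∈ Set.Icc (0 : ℝ) (2 * Real.pi),
        (∀ ε > (0 : ℝ), ν (Set.Ioo (t - ε) (t + ε)) ≠ 0) →
        ∀ ε > (0 : ℝ), (ν (Set.Icc (t - ε) (t + ε))).toReal ≤ C * ε) ∧
    T = U :=
  singular_unitary_maximal_general ν hν0 hνsing hνsupp U T hT μ hspec hμsing c hc hres
end

section
/- Let T, T' be contractions on H such that Tⁿ is Z-dominated by T'ⁿ with a uniform constant c for every n ≥ 1, i.e., ‖(Tⁿ - T'ⁿ)h‖² + ‖D_{Tⁿ}h‖² ≤ c²‖D_{T'ⁿ}h‖² for all h. Then for all h ∈ H: (1/4)|⟨(S_T - S_{T'})h, h⟩|² · ‖h‖^{-2} ≤ c²⟨(I - S_{T'})h, h⟩ when ‖h‖ = 1, and more precisely | ‖S_T^{1/2}h‖ - ‖S_{T'}^{1/2}h‖ |² + ‖(I - S_T)^{1/2}h‖² ≤ c² ‖(I - S_{T'})^{1/2}h‖². -/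
open ContinuousLinearMap Filter

local notation "⟪" x ", " y "⟫" => @inner ℂ _ _ x y

/-! The sequence `‖Tⁿh‖² = ⟪T*ⁿTⁿh, h⟫` converges to `⟪S_T h, h⟫`, which is therefore real and
lies in `[0, ‖h‖²]`. The reverse triangle inequality turns Z-domination of `Tⁿ` by `T'ⁿ` into
`|‖Tⁿh‖ - ‖T'ⁿh‖|² + ‖h‖² - ‖Tⁿh‖² ≤ c² (‖h‖² - ‖T'ⁿh‖²)`, and letting `n → ∞` gives the first
inequality. For `‖h‖ = 1` the second follows from `|s - s'| = |√s - √s'| (√s + √s') ≤ 2 |√s - √s'|`. -/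

theorem abs_sub_le_two_mul_abs_sqrt_sub_sqrt {a b : ℝ} (ha₀ : 0 ≤ a) (ha₁ : a ≤ 1)
    (hb₀ : 0 ≤ b) (hb₁ : b ≤ 1) : |a - b| ≤ 2 * |√a - √b| := by
  have hfactor : a - b = (√a - √b) * (√a + √b) := by
    rw [mul_comm, ← sq_sub_sq, Real.sq_sqrt ha₀, Real.sq_sqrt hb₀]
  have hsum : |√a + √b| ≤ 2 := by
    rw [abs_of_nonneg (by positivity)]
    linarith [Real.sqrt_le_one.mpr ha₁, Real.sqrt_le_one.mpr hb₁]
  rw [hfactor, abs_mul, mul_comm 2]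
  exact mul_le_mul_of_nonneg_left hsum (abs_nonneg _)

theorem sq_abs_sqrt_sub_sqrt_add_le_of_tendsto_norm_sq {E : Type*} [SeminormedAddCommGroup E]
    {u v : ℕ → E} {s s' a k : ℝ}
    (hu : Tendsto (fun n => ‖u n‖ ^ 2) atTop (nhds s))
    (hv : Tendsto (fun n => ‖v n‖ ^ 2) atTop (nhds s'))
    (hle : ∀ᶠ n in atTop, ‖u n - v n‖ ^ 2 + (a - ‖u n‖ ^ 2) ≤ k * (a - ‖v n‖ ^ 2)) :
    |√s - √s'| ^ 2 + (a - s) ≤ k * (a - s') := by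
  have hsqrt {w : ℕ → E} {t : ℝ} (hw : Tendsto (fun n => ‖w n‖ ^ 2) atTop (nhds t)) :
      Tendsto (fun n => ‖w n‖) atTop (nhds √t) :=
    ((Real.continuous_sqrt.tendsto t).comp hw).congr fun n => Real.sqrt_sq (norm_nonneg _)
  refine le_of_tendsto_of_tendsto (((hsqrt hu).sub (hsqrt hv)).abs.pow 2 |>.add
    (tendsto_const_nhds.sub hu)) (tendsto_const_nhds.mul (tendsto_const_nhds.sub hv)) ?_
  filter_upwards [hle] with n hn
  have hrev : |‖u n‖ - ‖v n‖| ^ 2 ≤ ‖u n - v n‖ ^ 2 :=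
    pow_le_pow_left₀ (abs_nonneg _) (abs_norm_sub_norm_le _ _) 2
  linarith

theorem norm_pow_apply_le_of_norm_le_one {𝕜 E : Type*} [NontriviallyNormedField 𝕜]
    [SeminormedAddCommGroup E] [NormedSpace 𝕜 E] {T : E →L[𝕜] E} (hT : ‖T‖ ≤ 1) (n : ℕ)
    (h : E) : ‖(T ^ n) h‖ ≤ ‖h‖ := by
  induction n with
  | zero => simp
  | succ n ih =>
    rw [pow_succ', mul_apply_eq_comp]
    exact (T.le_of_opNorm_le hT _).trans (by linarith)

section InnerProductSpace

variable {H : Type*} [NormedAddCommGroup H] [InnerProductSpace ℂ H]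

theorem re_inner_one_sub_apply_self (A : H →L[ℂ] H) (h : H) :
    Complex.re ⟪((1 : H →L[ℂ] H) - A) h, h⟫ = ‖h‖ ^ 2 - Complex.re ⟪A h, h⟫ := by
  rw [sub_apply, one_apply_eq_self, inner_sub_left, Complex.sub_re, ← RCLike.re_to_complex,
    inner_self_eq_norm_sq]

variable [CompleteSpace H]

theorem inner_adjoint_pow_mul_pow_apply_self (T : H →L[ℂ] H) (n : ℕ) (h : H) :
    ⟪((adjoint T) ^ n * T ^ n) h, h⟫ = ((‖(T ^ n) h‖ ^ 2 : ℝ) : ℂ) := by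
  rw [← star_eq_adjoint, ← star_pow, mul_apply_eq_comp, star_eq_adjoint, adjoint_inner_left,
    inner_self_eq_norm_sq_to_K]
  norm_cast

variable {T : H →L[ℂ] H} {h x : H}

theorem tendsto_inner_of_tendsto_adjoint_pow_mul_pow
    (hS : Tendsto (fun n : ℕ => ((adjoint T) ^ n * T ^ n) h) atTop (nhds x)) :
    Tendsto (fun n => ((‖(T ^ n) h‖ ^ 2 : ℝ) : ℂ)) atTop (nhds ⟪x, h⟫) := by
  simpa only [inner_adjoint_pow_mul_pow_apply_self] using
    hS.inner (𝕜 := ℂ) (tendsto_const_nhds (x := h))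

theorem tendsto_norm_pow_apply_sq
    (hS : Tendsto (fun n : ℕ => ((adjoint T) ^ n * T ^ n) h) atTop (nhds x)) :
    Tendsto (fun n => ‖(T ^ n) h‖ ^ 2) atTop (nhds (Complex.re ⟪x, h⟫)) := by
  simpa only [Function.comp_def, Complex.ofReal_re] using
    (Complex.continuous_re.tendsto _).comp (tendsto_inner_of_tendsto_adjoint_pow_mul_pow hS)

theorem inner_eq_ofReal_re_of_tendsto
    (hS : Tendsto (fun n : ℕ => ((adjoint T) ^ n * T ^ n) h) atTop (nhds x)) :
    ⟪x, h⟫ = (Complex.re ⟪x, h⟫ : ℂ) := by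
  have him : Complex.im ⟪x, h⟫ = 0 :=
    tendsto_nhds_unique ((Complex.continuous_im.tendsto _).comp
      (tendsto_inner_of_tendsto_adjoint_pow_mul_pow hS))
      (by simpa only [Function.comp_def, Complex.ofReal_im] using tendsto_const_nhds)
  exact Complex.ext rfl (by simp [him])

theorem re_inner_le_norm_sq_of_tendsto (hT : ‖T‖ ≤ 1)
    (hS : Tendsto (fun n : ℕ => ((adjoint T) ^ n * T ^ n) h) atTop (nhds x)) :
    Complex.re ⟪x, h⟫ ≤ ‖h‖ ^ 2 :=
  le_of_tendsto' (tendsto_norm_pow_apply_sq hS) fun n =>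
    pow_le_pow_left₀ (norm_nonneg _) (norm_pow_apply_le_of_norm_le_one hT n h) 2

theorem re_inner_nonneg_of_tendsto
    (hS : Tendsto (fun n : ℕ => ((adjoint T) ^ n * T ^ n) h) atTop (nhds x)) :
    0 ≤ Complex.re ⟪x, h⟫ :=
  ge_of_tendsto' (tendsto_norm_pow_apply_sq hS) fun _ => sq_nonneg _

end InnerProductSpace

theorem asymptotic_limits_of_uniform_z_domination_general {H : Type*} [NormedAddCommGroup H]
    [InnerProductSpace ℂ H] [CompleteSpace H] (T T' : H →L[ℂ] H)
    (hT : ‖T‖ ≤ 1) (hT' : ‖T'‖ ≤ 1) (c : ℝ)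
    (S S' : H →L[ℂ] H)
    (hS : ∀ h : H, Tendsto (fun n : ℕ => ((adjoint T) ^ n * T ^ n) h) atTop (nhds (S h)))
    (hS' : ∀ h : H, Tendsto (fun n : ℕ => ((adjoint T') ^ n * T' ^ n) h) atTop (nhds (S' h)))
    (hZ : ∀ n : ℕ, 1 ≤ n → ∀ h : H,
      ‖(T ^ n - T' ^ n) h‖ ^ 2 + (‖h‖ ^ 2 - ‖(T ^ n) h‖ ^ 2) ≤
        c ^ 2 * (‖h‖ ^ 2 - ‖(T' ^ n) h‖ ^ 2)) :
    (∀ h : H,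
      |Real.sqrt (Complex.re ⟪S h, h⟫) - Real.sqrt (Complex.re ⟪S' h, h⟫)| ^ 2 +
        Complex.re ⟪((1 : H →L[ℂ] H) - S) h, h⟫ ≤
        c ^ 2 * Complex.re ⟪((1 : H →L[ℂ] H) - S') h, h⟫) ∧
    (∀ h : H, ‖h‖ = 1 →
      (1 / 4) * ‖⟪(S - S') h, h⟫‖ ^ 2 ≤
        c ^ 2 * Complex.re ⟪((1 : H →L[ℂ] H) - S') h, h⟫) := by
  have hlimit (h : H) :
      |√(Complex.re ⟪S h, h⟫) - √(Complex.re ⟪S' h, h⟫)| ^ 2 +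
        Complex.re ⟪((1 : H →L[ℂ] H) - S) h, h⟫ ≤
        c ^ 2 * Complex.re ⟪((1 : H →L[ℂ] H) - S') h, h⟫ := by
    rw [re_inner_one_sub_apply_self, re_inner_one_sub_apply_self]
    refine sq_abs_sqrt_sub_sqrt_add_le_of_tendsto_norm_sq (tendsto_norm_pow_apply_sq (hS h))
      (tendsto_norm_pow_apply_sq (hS' h)) ?_
    filter_upwards [eventually_ge_atTop 1] with n hn
    simpa only [sub_apply] using hZ n hn h
  refine ⟨hlimit, fun h hh => ?_⟩
  set s := Complex.re ⟪S h, h⟫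
  set s' := Complex.re ⟪S' h, h⟫
  have hs₁ : s ≤ 1 := by simpa [hh] using re_inner_le_norm_sq_of_tendsto hT (hS h)
  have hs₁' : s' ≤ 1 := by simpa [hh] using re_inner_le_norm_sq_of_tendsto hT' (hS' h)
  have hnorm : ‖⟪(S - S') h, h⟫‖ = |s - s'| := by
    rw [sub_apply, inner_sub_left, inner_eq_ofReal_re_of_tendsto (hS h),
      inner_eq_ofReal_re_of_tendsto (hS' h), ← Complex.ofReal_sub, Complex.norm_real,
      Real.norm_eq_abs]
  have hdefect : 0 ≤ Complex.re ⟪((1 : H →L[ℂ] H) - S) h, h⟫ := by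
    rw [re_inner_one_sub_apply_self, hh]
    linarith
  have hfactor := abs_sub_le_two_mul_abs_sqrt_sub_sqrt (re_inner_nonneg_of_tendsto (hS h)) hs₁
    (re_inner_nonneg_of_tendsto (hS' h)) hs₁'
  calc (1 / 4) * ‖⟪(S - S') h, h⟫‖ ^ 2 ≤ |√s - √s'| ^ 2 := by
        rw [hnorm]
        nlinarith [abs_nonneg (s - s')]
    _ ≤ c ^ 2 * Complex.re ⟪((1 : H →L[ℂ] H) - S') h, h⟫ := by linarith [hlimit h]

/-- uniform Z-domination of all powers `Tⁿ` by `T'ⁿ` yields inequalities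
between the asymptotic limits `S_T`, `S_{T'}`; here `‖S_T^{1/2}h‖ = √(re⟪S_T h, h⟫)` and
`‖(I-S_T)^{1/2}h‖² = re⟪(I-S_T)h, h⟫`. -/
theorem asymptotic_limits_of_uniform_z_domination {H : Type*} [NormedAddCommGroup H]
    [InnerProductSpace ℂ H] [CompleteSpace H] (T T' : H →L[ℂ] H)
    (hT : ‖T‖ ≤ 1) (hT' : ‖T'‖ ≤ 1) (c : ℝ) (hc : 1 ≤ c)
    (S S' : H →L[ℂ] H)
    (hS : ∀ h : H, Tendsto (fun n : ℕ => ((adjoint T) ^ n * T ^ n) h) atTop (nhds (S h)))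
    (hS' : ∀ h : H, Tendsto (fun n : ℕ => ((adjoint T') ^ n * T' ^ n) h) atTop (nhds (S' h)))
    (hZ : ∀ n : ℕ, 1 ≤ n → ∀ h : H,
      ‖(T ^ n - T' ^ n) h‖ ^ 2 + (‖h‖ ^ 2 - ‖(T ^ n) h‖ ^ 2) ≤
        c ^ 2 * (‖h‖ ^ 2 - ‖(T' ^ n) h‖ ^ 2)) :
    (∀ h : H,
      |Real.sqrt (Complex.re ⟪S h, h⟫) - Real.sqrt (Complex.re ⟪S' h, h⟫)| ^ 2 +
        Complex.re ⟪((1 : H →L[ℂ] H) - S) h, h⟫ ≤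
        c ^ 2 * Complex.re ⟪((1 : H →L[ℂ] H) - S') h, h⟫) ∧
    (∀ h : H, ‖h‖ = 1 →
      (1 / 4) * ‖⟪(S - S') h, h⟫‖ ^ 2 ≤
        c ^ 2 * Complex.re ⟪((1 : H →L[ℂ] H) - S') h, h⟫) :=
  asymptotic_limits_of_uniform_z_domination_general T T' hT hT' c S S' hS hS' hZ
end

section
/- Let A, A' be positive contractions on H such that I - A² ≤ c(I - A'²) for some constant c > 0. Then A is Z-dominated by A': there exists c' > 0 with ‖D_A h‖ ≤ c'‖D_{A'}h‖ and ‖(A' - A)h‖ ≤ c'‖D_{A'}h‖ for all h ∈ H. -/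
/-!
Write `‖D_A h‖² = ‖h‖² - ‖A h‖²`. For a positive contraction `A` one has `A² ≤ A`, hence
`(I - A)² = I - 2A + A² ≤ I - A²`, i.e. `‖(I - A) h‖ ≤ ‖D_A h‖`. Writing
`(A' - A) h = (I - A) h - (I - A') h` then bounds `‖(A' - A) h‖` by `‖D_A h‖ + ‖D_{A'} h‖`,
and the Loewner inequality gives `‖D_A h‖ ≤ √c ‖D_{A'} h‖`.
-/

open ContinuousLinearMap

local notation "⟪" x ", " y "⟫" => @inner ℂ _ _ x y

theorem CStarAlgebra.mul_self_le_self {A : Type*} [CStarAlgebra A] [PartialOrder A]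
    [StarOrderedRing A] {a : A} (ha₀ : 0 ≤ a) (ha₁ : a ≤ 1) : a * a ≤ a := by
  simpa [sq] using CStarAlgebra.pow_antitone ha₀ ha₁ one_le_two

section RCLike

variable {𝕜 E : Type*} [RCLike 𝕜] [NormedAddCommGroup E] [InnerProductSpace 𝕜 E]

theorem LinearMap.IsSymmetric.re_inner_mul_self_apply_self {A : E →L[𝕜] E}
    (hA : (A : E →ₗ[𝕜] E).IsSymmetric) (h : E) :
    RCLike.re (inner 𝕜 ((A * A) h) h) = ‖A h‖ ^ 2 :=
  (congrArg RCLike.re (hA (A h) h)).trans (inner_self_eq_norm_sq _)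

theorem LinearMap.IsSymmetric.re_inner_one_sub_mul_self_apply_self {A : E →L[𝕜] E}
    (hA : (A : E →ₗ[𝕜] E).IsSymmetric) (h : E) :
    RCLike.re (inner 𝕜 ((1 - A * A) h) h) = ‖h‖ ^ 2 - ‖A h‖ ^ 2 := by
  rw [_root_.sub_apply, inner_sub_left, map_sub, one_apply_eq_self, inner_self_eq_norm_sq,
    hA.re_inner_mul_self_apply_self]

end RCLike

section Complex

variable {H : Type*} [NormedAddCommGroup H] [InnerProductSpace ℂ H] [CompleteSpace H]

theorem ContinuousLinearMap.IsPositive.norm_apply_sq_le_re_inner {A : H →L[ℂ] H}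
    (hA : A.IsPositive) (hAn : ‖A‖ ≤ 1) (h : H) : ‖A h‖ ^ 2 ≤ RCLike.re (inner ℂ (A h) h) := by
  have hA₀ : 0 ≤ A := (nonneg_iff_isPositive A).mpr hA
  have hA₁ : A ≤ 1 := (CStarAlgebra.norm_le_one_iff_of_nonneg A hA₀).mp hAn
  have hsq : (A - A * A).IsPositive := (le_def _ _).mp (CStarAlgebra.mul_self_le_self hA₀ hA₁)
  have := hsq.re_inner_nonneg_left h
  rw [sub_apply, inner_sub_left, map_sub, hA.isSymmetric.re_inner_mul_self_apply_self] at this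
  linarith

theorem ContinuousLinearMap.IsPositive.norm_sub_apply_le_sqrt {A : H →L[ℂ] H}
    (hA : A.IsPositive) (hAn : ‖A‖ ≤ 1) (h : H) :
    ‖h - A h‖ ≤ Real.sqrt (‖h‖ ^ 2 - ‖A h‖ ^ 2) := by
  have hsq : ‖h - A h‖ ^ 2 ≤ ‖h‖ ^ 2 - ‖A h‖ ^ 2 := by
    rw [@norm_sub_sq ℂ, inner_re_symm]
    linarith [hA.norm_apply_sq_le_re_inner hAn h]
  simpa using Real.abs_le_sqrt hsq

end Complex

/-- for positive contractions `A, A'`, the Loewner inequality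
`I - A² ≤ c(I - A'²)` implies that `A` is Z-dominated by `A'`
(here `‖D_A h‖ = √(‖h‖² - ‖Ah‖²)` since `A* = A`). -/
theorem z_domination_of_positive_contractions {H : Type*} [NormedAddCommGroup H]
    [InnerProductSpace ℂ H] [CompleteSpace H] (A A' : H →L[ℂ] H)
    (hA : A.IsPositive) (hA' : A'.IsPositive) (hAn : ‖A‖ ≤ 1) (hA'n : ‖A'‖ ≤ 1)
    (c : ℝ) (hc : 0 < c)
    (hloew : ∀ h : H, Complex.re ⟪((1 : H →L[ℂ] H) - A * A) h, h⟫ ≤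
      c * Complex.re ⟪((1 : H →L[ℂ] H) - A' * A') h, h⟫) :
    ∃ c' : ℝ, 0 < c' ∧
      (∀ h : H, Real.sqrt (‖h‖ ^ 2 - ‖A h‖ ^ 2) ≤ c' * Real.sqrt (‖h‖ ^ 2 - ‖A' h‖ ^ 2)) ∧
      (∀ h : H, ‖(A' - A) h‖ ≤ c' * Real.sqrt (‖h‖ ^ 2 - ‖A' h‖ ^ 2)) := by
  set D : (H →L[ℂ] H) → H → ℝ := fun B h ↦ Real.sqrt (‖h‖ ^ 2 - ‖B h‖ ^ 2)
  have hD : ∀ h, D A h ≤ Real.sqrt c * D A' h := fun h ↦ by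
    have := hloew h
    rw [← RCLike.re_to_complex, ← RCLike.re_to_complex,
      hA.isSymmetric.re_inner_one_sub_mul_self_apply_self,
      hA'.isSymmetric.re_inner_one_sub_mul_self_apply_self] at this
    rw [← Real.sqrt_mul hc.le]
    exact Real.sqrt_le_sqrt this
  have hD' : ∀ h, Real.sqrt c * D A' h ≤ (Real.sqrt c + 1) * D A' h := fun h ↦
    mul_le_mul_of_nonneg_right (le_add_of_nonneg_right zero_le_one) (Real.sqrt_nonneg _)
  refine ⟨Real.sqrt c + 1, by positivity, fun h ↦ (hD h).trans (hD' h), fun h ↦ ?_⟩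
  calc ‖(A' - A) h‖ = ‖(h - A h) - (h - A' h)‖ := by rw [sub_apply, sub_sub_sub_cancel_left]
    _ ≤ ‖h - A h‖ + ‖h - A' h‖ := norm_sub_le _ _
    _ ≤ Real.sqrt c * D A' h + D A' h := by
      gcongr
      · exact (hA.norm_sub_apply_le_sqrt hAn h).trans (hD h)
      · exact hA'.norm_sub_apply_le_sqrt hA'n h
    _ = (Real.sqrt c + 1) * D A' h := by ring
end
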